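/- Let V = ℂ^{n+1} with standard basis e_0, …, e_n (n ≥ 1), and let T be the unique linear endomorphism of ⋀²V satisfying T(e_i ∧ e_j) = (n−i)(e_{i+1} ∧ e_j) + (n−j)(e_i ∧ e_{j+1}) for all 0 ≤ i < j ≤ n, with the convention e_{n+1} = 0. Let W ⊆ ⋀²V be a linear subspace with T(W) ⊆ W and e_{n−1} ∧ e_n ∉ W. Then W contains no nonzero decomposable bivector: if v, v' ∈ V and v ∧ v' ∈ W, then v ∧ v' = 0. -/

import Mathlib

open ExteriorAlgebra

/-- The wedge product of two vectors, as an element of the second exterior power. -/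
noncomputable def wedge {V : Type*} [AddCommGroup V] [Module ℂ V] (u w : V) :
    ⋀[ℂ]^2 V :=
  ⟨ι ℂ u * ι ℂ w, by
    have h : ι ℂ u * ι ℂ w ∈
        LinearMap.range (ι ℂ : V →ₗ[ℂ] ExteriorAlgebra ℂ V) *
          LinearMap.range (ι ℂ : V →ₗ[ℂ] ExteriorAlgebra ℂ V) :=
      Submodule.mul_mem_mul (LinearMap.mem_range_self _ u) (LinearMap.mem_range_self _ w)
    simpa [pow_two] using h⟩

/-- The standard basis vector `e_i` of `ℂ^{n+1}` for `0 ≤ i ≤ n`; by convention `e i = 0`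
for `i > n` (in particular `e (n+1) = 0`). -/
noncomputable def e (n : ℕ) (i : ℕ) : Fin (n + 1) → ℂ :=
  fun k => if (k : ℕ) = i then 1 else 0



section WedgeLemmas

variable {V : Type*} [AddCommGroup V] [Module ℂ V]

lemma wedge_add_left (u u' w : V) : wedge (u + u') w = wedge u w + wedge u' w := by
  apply Subtype.ext
  simp [wedge, add_mul]

lemma wedge_add_right (u w w' : V) : wedge u (w + w') = wedge u w + wedge u w' := by
  apply Subtype.ext
  simp [wedge, mul_add]

lemma wedge_smul_left (c : ℂ) (u w : V) : wedge (c • u) w = c • wedge u w := by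
  apply Subtype.ext
  simp [wedge, smul_mul_assoc]

lemma wedge_smul_right (c : ℂ) (u w : V) : wedge u (c • w) = c • wedge u w := by
  apply Subtype.ext
  simp [wedge, mul_smul_comm]

lemma wedge_self (u : V) : wedge u u = 0 := by
  apply Subtype.ext
  simp [wedge, ι_sq_zero]

lemma wedge_swap (u w : V) : wedge u w = - wedge w u := by
  apply Subtype.ext
  have h := ExteriorAlgebra.ι_add_mul_swap (R := ℂ) u w
  simp only [wedge, Submodule.coe_neg, Submodule.coe_mk]
  rw [eq_neg_iff_add_eq_zero, h]

lemma wedge_zero_left (w : V) : wedge (0 : V) w = 0 := by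
  apply Subtype.ext
  simp [wedge]

lemma wedge_zero_right (u : V) : wedge u (0 : V) = 0 := by
  apply Subtype.ext
  simp [wedge]

lemma wedge_sum_left {α : Type*} (s : Finset α) (f : α → V) (w : V) :
    wedge (∑ i ∈ s, f i) w = ∑ i ∈ s, wedge (f i) w := by
  classical
  induction s using Finset.induction_on with
  | empty => simp [wedge_zero_left]
  | insert _ _ h ih => simp [Finset.sum_insert h, wedge_add_left, ih]

lemma wedge_sum_right {α : Type*} (s : Finset α) (u : V) (f : α → V) :
    wedge u (∑ i ∈ s, f i) = ∑ i ∈ s, wedge u (f i) := by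
  classical
  induction s using Finset.induction_on with
  | empty => simp [wedge_zero_right]
  | insert _ _ h ih => simp [Finset.sum_insert h, wedge_add_right, ih]

end WedgeLemmas

lemma eq_sum (n : ℕ) (v : Fin (n + 1) → ℂ) : v = ∑ i : Fin (n + 1), v i • e n ↑i := by
  funext k
  rw [Finset.sum_apply]
  rw [Finset.sum_eq_single k]
  · simp [e]
  · intro b _ hb
    simp only [Pi.smul_apply, e, smul_eq_mul]
    rw [if_neg (by simpa [Fin.ext_iff, eq_comm] using hb), mul_zero]
  · intro h; exact absurd (Finset.mem_univ k) h

noncomputable def Yop (n : ℕ) : (Fin (n + 1) → ℂ) →ₗ[ℂ] (Fin (n + 1) → ℂ) where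
  toFun v := fun k =>
    if h : (k : ℕ) = 0 then 0
    else ((n + 1 - (k : ℕ) : ℕ) : ℂ) * v ⟨(k : ℕ) - 1, by have := k.2; omega⟩
  map_add' u v := by
    funext k
    by_cases h : (k : ℕ) = 0
    · simp only [dif_pos h, Pi.add_apply, add_zero]
    · simp only [dif_neg h, Pi.add_apply]; ring
  map_smul' c v := by
    funext k
    by_cases h : (k : ℕ) = 0
    · simp only [dif_pos h, Pi.smul_apply, smul_eq_mul, RingHom.id_apply, mul_zero]
    · simp only [dif_neg h, Pi.smul_apply, smul_eq_mul, RingHom.id_apply]; ring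

lemma Yop_e (n i : ℕ) : Yop n (e n i) = ((n - i : ℕ) : ℂ) • e n (i + 1) := by
  funext k
  have hk := k.2
  simp only [Yop, LinearMap.coe_mk, AddHom.coe_mk, e, Pi.smul_apply, smul_eq_mul]
  by_cases h : (k : ℕ) = 0
  · rw [dif_pos h, if_neg (by omega), mul_zero]
  · rw [dif_neg h]
    by_cases h2 : (k : ℕ) = i + 1
    · rw [if_pos (by omega), if_pos h2, mul_one, mul_one]
      congr 1
      omega
    · rw [if_neg (by omega), if_neg h2, mul_zero, mul_zero]

lemma Y_apply_succ (n s : ℕ) (hs : s + 1 ≤ n) (v : Fin (n + 1) → ℂ) :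
    Yop n v ⟨s + 1, by omega⟩ = ((n - s : ℕ) : ℂ) * v ⟨s, by omega⟩ := by
  simp only [Yop, LinearMap.coe_mk, AddHom.coe_mk]
  rw [dif_neg (by simp)]
  congr 2
  omega

lemma Y_supp (n s : ℕ) (v : Fin (n + 1) → ℂ) (hv : ∀ k : Fin (n + 1), (k : ℕ) < s → v k = 0) :
    ∀ k : Fin (n + 1), (k : ℕ) < s + 1 → Yop n v k = 0 := by
  intro k hk
  simp only [Yop, LinearMap.coe_mk, AddHom.coe_mk]
  split
  · rfl
  · rename_i h
    rw [hv _ (by simp; omega), mul_zero]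

lemma Ypow_supp (n : ℕ) (v : Fin (n + 1) → ℂ) (s : ℕ)
    (hv : ∀ k : Fin (n + 1), (k : ℕ) < s → v k = 0) :
    ∀ m, ∀ k : Fin (n + 1), (k : ℕ) < s + m → (Yop n ^ m) v k = 0 := by
  intro m
  induction m with
  | zero => simpa using hv
  | succ m ih =>
    intro k hk
    have h1 : (Yop n ^ (m + 1)) v = Yop n ((Yop n ^ m) v) := by
      rw [pow_succ', Module.End.mul_apply]
    rw [h1]
    exact Y_supp n (s + m) _ ih k (by omega)

lemma supp_eq_zero (n : ℕ) (v : Fin (n + 1) → ℂ) (s : ℕ) (hs : n + 1 ≤ s)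
    (hv : ∀ k : Fin (n + 1), (k : ℕ) < s → v k = 0) : v = 0 := by
  funext k
  exact hv k (by have := k.2; omega)

lemma Ypow_eq_zero (n : ℕ) (v : Fin (n + 1) → ℂ) (s m : ℕ) (hs : n + 1 ≤ s + m)
    (hv : ∀ k : Fin (n + 1), (k : ℕ) < s → v k = 0) : (Yop n ^ m) v = 0 :=
  supp_eq_zero n _ (s + m) hs (Ypow_supp n v s hv m)

lemma Ypow_coord (n : ℕ) (v : Fin (n + 1) → ℂ) :
    ∀ m s (hs : s + m ≤ n), (Yop n ^ m) v ⟨s + m, by omega⟩ =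
      (((n - s).descFactorial m : ℕ) : ℂ) * v ⟨s, by omega⟩ := by
  intro m
  induction m with
  | zero => intro s hs; simp
  | succ m ih =>
    intro s hs
    have h1 : (Yop n ^ (m + 1)) v = Yop n ((Yop n ^ m) v) := by
      rw [pow_succ', Module.End.mul_apply]
    have h2 : (⟨s + (m + 1), by omega⟩ : Fin (n + 1)) = ⟨(s + m) + 1, by omega⟩ := rfl
    rw [h1, h2, Y_apply_succ n (s + m) (by omega)]
    rw [ih s (by omega)]
    have h3 : (n - s).descFactorial (m + 1) = (n - (s + m)) * ((n - s).descFactorial m) := by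
      rw [Nat.descFactorial_succ]
      congr 1
      omega
    rw [h3]
    push_cast
    ring

lemma pow_mem_W (n : ℕ) (T : Module.End ℂ (⋀[ℂ]^2 (Fin (n + 1) → ℂ)))
    (W : Submodule ℂ (⋀[ℂ]^2 (Fin (n + 1) → ℂ)))
    (hTW : ∀ w ∈ W, T w ∈ W) (x : ⋀[ℂ]^2 (Fin (n + 1) → ℂ)) (hx : x ∈ W) :
    ∀ m, (T ^ m) x ∈ W := by
  intro m
  induction m with
  | zero => simpa using hx
  | succ m ih =>
    have h1 : (T ^ (m + 1)) x = T ((T ^ m) x) := by rw [pow_succ', Module.End.mul_apply]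
    rw [h1]; exact hTW _ ih

section Main

variable (n : ℕ) (T : Module.End ℂ (⋀[ℂ]^2 (Fin (n + 1) → ℂ)))
  (hT : ∀ i j : ℕ, i < j → j ≤ n →
      T (wedge (e n i) (e n j)) =
        (n - i) • wedge (e n (i + 1)) (e n j) + (n - j) • wedge (e n i) (e n (j + 1)))

include hT

lemma T_wedge (u w : Fin (n + 1) → ℂ) :
    T (wedge u w) = wedge (Yop n u) w + wedge u (Yop n w) := by
  have hT' : ∀ i j : ℕ, i < j → j ≤ n →
      T (wedge (e n i) (e n j)) =
        ((n - i : ℕ) : ℂ) • wedge (e n (i + 1)) (e n j) +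
          ((n - j : ℕ) : ℂ) • wedge (e n i) (e n (j + 1)) := by
    intro i j h1 h2
    rw [hT i j h1 h2, Nat.cast_smul_eq_nsmul, Nat.cast_smul_eq_nsmul]
  have base : ∀ i j : Fin (n + 1), T (wedge (e n ↑i) (e n ↑j)) =
      wedge (Yop n (e n ↑i)) (e n ↑j) + wedge (e n ↑i) (Yop n (e n ↑j)) := by
    intro i j
    rcases lt_trichotomy (i : ℕ) (j : ℕ) with h | h | h
    · rw [hT' ↑i ↑j h (by have := j.2; omega), Yop_e, Yop_e,
        wedge_smul_left, wedge_smul_right]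
    · have hij : i = j := Fin.ext h
      subst hij
      rw [wedge_self, map_zero, Yop_e, wedge_smul_left, wedge_smul_right,
        wedge_swap (e n ↑i) (e n (↑i + 1))]
      module
    · rw [wedge_swap (e n ↑i) (e n ↑j), map_neg,
        hT' ↑j ↑i h (by have := i.2; omega), Yop_e, Yop_e,
        wedge_smul_left, wedge_smul_right,
        wedge_swap (e n (↑j + 1)) (e n ↑i), wedge_swap (e n ↑j) (e n (↑i + 1))]
      module
  rw [eq_sum n u, eq_sum n w]
  simp only [wedge_sum_left, wedge_sum_right, wedge_smul_left, wedge_smul_right,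
    map_sum, map_smul, ← Finset.sum_add_distrib, ← smul_add]
  refine Finset.sum_congr rfl fun i _ => congrArg (fun z => w i • z)
    (Finset.sum_congr rfl fun j _ => congrArg (fun z => u j • z) (base j i))

set_option maxHeartbeats 1000000 in
lemma T_pow_wedge (v v' : Fin (n + 1) → ℂ) (m : ℕ) :
    (T ^ m) (wedge v v') = ∑ j ∈ Finset.range (m + 1),
      ((m.choose j : ℕ) : ℂ) • wedge ((Yop n ^ j) v) ((Yop n ^ (m - j)) v') := by
  induction m with
  | zero => simp
  | succ m ih =>
    have h1 : (T ^ (m + 1)) (wedge v v') = T ((T ^ m) (wedge v v')) := by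
      rw [pow_succ', Module.End.mul_apply]
    have hY : ∀ (x : Fin (n + 1) → ℂ) (j : ℕ), Yop n ((Yop n ^ j) x) = (Yop n ^ (j + 1)) x :=
      fun x j => by rw [pow_succ', Module.End.mul_apply]
    rw [h1, ih, map_sum]
    simp only [map_smul, T_wedge n T hT, hY]
    rw [Finset.sum_range_succ' (fun j => ((m + 1).choose j : ℂ) •
      wedge ((Yop n ^ j) v) ((Yop n ^ (m + 1 - j)) v')) (m + 1)]
    simp only [smul_add, Finset.sum_add_distrib]
    have hre : ∀ j ∈ Finset.range (m + 1),
        ((m + 1).choose (j + 1) : ℂ) • wedge ((Yop n ^ (j + 1)) v) ((Yop n ^ (m + 1 - (j + 1))) v')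
        = (m.choose j : ℂ) • wedge ((Yop n ^ (j + 1)) v) ((Yop n ^ (m - j)) v')
          + (m.choose (j + 1) : ℂ) • wedge ((Yop n ^ (j + 1)) v) ((Yop n ^ (m - j)) v') := by
      intro j hj
      have : m + 1 - (j + 1) = m - j := by omega
      rw [this, Nat.choose_succ_succ]
      push_cast
      rw [add_smul]
    rw [Finset.sum_congr rfl hre, Finset.sum_add_distrib]
    have hB : ∑ j ∈ Finset.range (m + 1),
        (m.choose j : ℂ) • wedge ((Yop n ^ j) v) ((Yop n ^ (m - j + 1)) v')
        = ∑ j ∈ Finset.range (m + 1),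
          (m.choose (j + 1) : ℂ) • wedge ((Yop n ^ (j + 1)) v) ((Yop n ^ (m - j)) v')
          + ((m + 1).choose 0 : ℂ) • wedge ((Yop n ^ 0) v) ((Yop n ^ (m + 1 - 0)) v') := by
      rw [Finset.sum_range_succ' (fun j => (m.choose j : ℂ) •
        wedge ((Yop n ^ j) v) ((Yop n ^ (m - j + 1)) v')) m]
      have h0 : ∀ j ∈ Finset.range m,
          (m.choose (j + 1) : ℂ) • wedge ((Yop n ^ (j + 1)) v) ((Yop n ^ (m - (j + 1) + 1)) v')
          = (m.choose (j + 1) : ℂ) • wedge ((Yop n ^ (j + 1)) v) ((Yop n ^ (m - j)) v') := by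
        intro j hj
        simp only [Finset.mem_range] at hj
        have : m - (j + 1) + 1 = m - j := by omega
        rw [this]
      rw [Finset.sum_congr rfl h0, Finset.sum_range_succ (fun j => (m.choose (j + 1) : ℂ) •
        wedge ((Yop n ^ (j + 1)) v) ((Yop n ^ (m - j)) v')) m]
      simp only [Nat.choose_succ_self, Nat.cast_zero, zero_smul, add_zero, Nat.sub_zero,
        Nat.choose_zero_right, Nat.cast_one, one_smul, Nat.sub_self, pow_zero, Module.End.one_apply]
    rw [hB, add_assoc]

end Main

lemma desc_pred (p : ℕ) (hp : 1 ≤ p) : p.descFactorial (p - 1) = p.factorial := by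
  obtain ⟨m, rfl⟩ : ∃ m, p = m + 1 := ⟨p - 1, by omega⟩
  have h1 : (m + 1).descFactorial (m + 1) = ((m + 1) - m) * (m + 1).descFactorial m :=
    Nat.descFactorial_succ _ _
  have h2 : (m + 1) - m = 1 := by omega
  rw [Nat.descFactorial_self, h2, one_mul] at h1
  simpa using h1.symm

lemma wedge_last (n : ℕ) (hn : 1 ≤ n) (u w : Fin (n + 1) → ℂ)
    (hu : ∀ k : Fin (n + 1), (k : ℕ) < n - 1 → u k = 0)
    (hw : ∀ k : Fin (n + 1), (k : ℕ) < n - 1 → w k = 0) :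
    wedge u w = (u ⟨n - 1, by omega⟩ * w ⟨n, by omega⟩ - u ⟨n, by omega⟩ * w ⟨n - 1, by omega⟩) •
      wedge (e n (n - 1)) (e n n) := by
  have decomp : ∀ x : Fin (n + 1) → ℂ, (∀ k : Fin (n + 1), (k : ℕ) < n - 1 → x k = 0) →
      x = x ⟨n - 1, by omega⟩ • e n (n - 1) + x ⟨n, by omega⟩ • e n n := by
    intro x hx
    funext k
    have hk := k.2
    simp only [Pi.add_apply, Pi.smul_apply, e, smul_eq_mul]
    by_cases h1 : (k : ℕ) = n - 1
    · rw [if_pos h1, if_neg (by omega), mul_one, mul_zero, add_zero]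
      exact congrArg x (Fin.ext h1)
    · by_cases h2 : (k : ℕ) = n
      · rw [if_neg h1, if_pos h2, mul_one, mul_zero, zero_add]
        exact congrArg x (Fin.ext h2)
      · rw [hx k (by omega), if_neg h1, if_neg h2, mul_zero, mul_zero, add_zero]
  conv_lhs => rw [decomp u hu, decomp w hw]
  simp only [wedge_add_left, wedge_add_right, wedge_smul_left, wedge_smul_right, wedge_self,
    smul_zero, add_zero, zero_add]
  rw [wedge_swap (e n n) (e n (n - 1))]
  module

lemma wedge_last1 (n : ℕ) (hn : 1 ≤ n) (u w : Fin (n + 1) → ℂ)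
    (hu : ∀ k : Fin (n + 1), (k : ℕ) < n - 1 → u k = 0)
    (hw : ∀ k : Fin (n + 1), (k : ℕ) < n - 1 → w k = 0) (x y : ℂ)
    (hx : u ⟨n - 1, by omega⟩ = x) (hy : w ⟨n, by omega⟩ = y)
    (hw1 : w ⟨n - 1, by omega⟩ = 0) :
    wedge u w = (x * y) • wedge (e n (n - 1)) (e n n) := by
  subst hx hy
  rw [wedge_last n hn u w hu hw, hw1, mul_zero, sub_zero]

lemma wedge_last2 (n : ℕ) (hn : 1 ≤ n) (u w : Fin (n + 1) → ℂ)
    (hu : ∀ k : Fin (n + 1), (k : ℕ) < n - 1 → u k = 0)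
    (hw : ∀ k : Fin (n + 1), (k : ℕ) < n - 1 → w k = 0) (x y : ℂ)
    (hx : u ⟨n, by omega⟩ = x) (hy : w ⟨n - 1, by omega⟩ = y)
    (hu1 : u ⟨n - 1, by omega⟩ = 0) :
    wedge u w = (-(x * y)) • wedge (e n (n - 1)) (e n n) := by
  subst hx hy
  rw [wedge_last n hn u w hu hw, hu1, zero_mul, zero_sub]

lemma Ypow_coord' (n : ℕ) (v : Fin (n + 1) → ℂ) (m s t : ℕ) (h : s + m ≤ n) (ht : t = s + m)
    (c : ℕ) (hc : (n - s).descFactorial m = c) (h1 : t < n + 1) (h2 : s < n + 1) :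
    (Yop n ^ m) v ⟨t, h1⟩ = (c : ℂ) * v ⟨s, h2⟩ := by
  subst ht hc
  exact Ypow_coord n v m s h

set_option maxHeartbeats 1000000 in
lemma main_step (n : ℕ)
    (T : Module.End ℂ (⋀[ℂ]^2 (Fin (n + 1) → ℂ)))
    (hT : ∀ i j : ℕ, i < j → j ≤ n →
      T (wedge (e n i) (e n j)) =
        (n - i) • wedge (e n (i + 1)) (e n j) + (n - j) • wedge (e n i) (e n (j + 1)))
    (W : Submodule ℂ (⋀[ℂ]^2 (Fin (n + 1) → ℂ)))
    (hTW : ∀ w ∈ W, T w ∈ W)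
    (hW : wedge (e n (n - 1)) (e n n) ∉ W)
    (i0 j0 : ℕ) (hij : i0 < j0) (hjn : j0 ≤ n)
    (v v' : Fin (n + 1) → ℂ)
    (hv : ∀ k : Fin (n + 1), (k : ℕ) < i0 → v k = 0)
    (ha : v ⟨i0, by omega⟩ ≠ 0)
    (hv' : ∀ k : Fin (n + 1), (k : ℕ) < j0 → v' k = 0)
    (hb : v' ⟨j0, by omega⟩ ≠ 0)
    (hmem : wedge v v' ∈ W) : False := by
  have hn : 1 ≤ n := by omega
  have key : ∀ m, (T ^ m) (wedge v v') ∈ W := pow_mem_W n T W hTW _ hmem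
  have hfacE : ∀ c : ℂ, c ≠ 0 →
      (T ^ (n - i0 + (n - j0) - 1)) (wedge v v') = c • wedge (e n (n - 1)) (e n n) → False := by
    intro c hc hEq
    apply hW
    have h1 : wedge (e n (n - 1)) (e n n) = c⁻¹ • (c • wedge (e n (n - 1)) (e n n)) := by
      rw [smul_smul, inv_mul_cancel₀ hc, one_smul]
    rw [h1, ← hEq]
    exact Submodule.smul_mem W _ (key _)
  obtain ⟨p, hp⟩ : ∃ p, n - i0 = p := ⟨_, rfl⟩
  obtain ⟨q, hq⟩ : ∃ q, n - j0 = q := ⟨_, rfl⟩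
  obtain ⟨N, hN⟩ : ∃ N, p + q - 1 = N := ⟨_, rfl⟩
  rw [hp, hq, hN] at hfacE
  have hp1 : 1 ≤ p := by omega
  have hpq : q < p := by omega
  have hbin := T_pow_wedge n T hT v v' N
  have hfacp : ((p.factorial : ℕ) : ℂ) ≠ 0 := Nat.cast_ne_zero.mpr (Nat.factorial_ne_zero p)
  have hfacq : ((q.factorial : ℕ) : ℂ) ≠ 0 := Nat.cast_ne_zero.mpr (Nat.factorial_ne_zero q)
  rcases Nat.eq_zero_or_pos q with hq0 | hq1
  · -- j0 = n
    have hsum : (T ^ N) (wedge v v') =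
        ((N.choose N : ℕ) : ℂ) • wedge ((Yop n ^ N) v) ((Yop n ^ (N - N)) v') := by
      rw [hbin]
      apply Finset.sum_eq_single N
      · intro j hj hjN
        have hz : (Yop n ^ (N - j)) v' = 0 :=
          Ypow_eq_zero n v' j0 (N - j) (by simp only [Finset.mem_range] at hj; omega) hv'
        rw [hz, wedge_zero_right, smul_zero]
      · intro h
        exact absurd (Finset.mem_range.mpr (by omega)) h
    rw [Nat.choose_self, Nat.sub_self, pow_zero, Nat.cast_one, one_smul,
      Module.End.one_apply] at hsum
    have hus : ∀ k : Fin (n + 1), (k : ℕ) < n - 1 → (Yop n ^ N) v k = 0 :=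
      fun k hk => Ypow_supp n v i0 hv N k (by omega)
    have hws : ∀ k : Fin (n + 1), (k : ℕ) < n - 1 → v' k = 0 :=
      fun k hk => hv' k (by omega)
    have hx : (Yop n ^ N) v ⟨n - 1, by omega⟩ =
        ((p.factorial : ℕ) : ℂ) * v ⟨i0, by omega⟩ :=
      Ypow_coord' n v N i0 (n - 1) (by omega) (by omega) p.factorial
        (by rw [hp, show N = p - 1 by omega]; exact desc_pred p hp1) (by omega) (by omega)
    have hy : v' ⟨n, by omega⟩ = v' ⟨j0, by omega⟩ := congrArg v' (Fin.ext (by simp; omega))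
    have hw1 : v' ⟨n - 1, by omega⟩ = 0 := hv' _ (by simp; omega)
    have hwl := wedge_last1 n hn ((Yop n ^ N) v) v' hus hws _ _ hx hy hw1
    exact hfacE _ (mul_ne_zero (mul_ne_zero hfacp ha) hb) (hsum.trans hwl)
  · -- two surviving terms
    have hpN : p ≤ N := by omega
    have hsub : ({p - 1, p} : Finset ℕ) ⊆ Finset.range (N + 1) := by
      intro x hx
      simp only [Finset.mem_insert, Finset.mem_singleton] at hx
      simp only [Finset.mem_range]
      omega
    have hzero : ∀ j ∈ Finset.range (N + 1), j ∉ ({p - 1, p} : Finset ℕ) →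
        ((N.choose j : ℕ) : ℂ) • wedge ((Yop n ^ j) v) ((Yop n ^ (N - j)) v') = 0 := by
      intro j hj hjne
      simp only [Finset.mem_range] at hj
      simp only [Finset.mem_insert, Finset.mem_singleton] at hjne
      push_neg at hjne
      rcases lt_or_ge j p with h | h
      · have hz : (Yop n ^ (N - j)) v' = 0 := Ypow_eq_zero n v' j0 (N - j) (by omega) hv'
        rw [hz, wedge_zero_right, smul_zero]
      · have hz : (Yop n ^ j) v = 0 := Ypow_eq_zero n v i0 j (by omega) hv
        rw [hz, wedge_zero_left, smul_zero]
    have hsum : (T ^ N) (wedge v v') =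
        ((N.choose (p - 1) : ℕ) : ℂ) • wedge ((Yop n ^ (p - 1)) v) ((Yop n ^ q) v')
        + ((N.choose p : ℕ) : ℂ) • wedge ((Yop n ^ p) v) ((Yop n ^ (q - 1)) v') := by
      rw [hbin, ← Finset.sum_subset hsub hzero,
        Finset.sum_insert (by simp only [Finset.mem_singleton]; omega), Finset.sum_singleton,
        show N - (p - 1) = q by omega, show N - p = q - 1 by omega]
    -- first term
    have hu1s : ∀ k : Fin (n + 1), (k : ℕ) < n - 1 → (Yop n ^ (p - 1)) v k = 0 :=
      fun k hk => Ypow_supp n v i0 hv (p - 1) k (by omega)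
    have hw1s : ∀ k : Fin (n + 1), (k : ℕ) < n - 1 → (Yop n ^ q) v' k = 0 :=
      fun k hk => Ypow_supp n v' j0 hv' q k (by omega)
    have hx1 : (Yop n ^ (p - 1)) v ⟨n - 1, by omega⟩ =
        ((p.factorial : ℕ) : ℂ) * v ⟨i0, by omega⟩ :=
      Ypow_coord' n v (p - 1) i0 (n - 1) (by omega) (by omega) p.factorial
        (by rw [hp]; exact desc_pred p hp1) (by omega) (by omega)
    have hy1 : (Yop n ^ q) v' ⟨n, by omega⟩ =
        ((q.factorial : ℕ) : ℂ) * v' ⟨j0, by omega⟩ :=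
      Ypow_coord' n v' q j0 n (by omega) (by omega) q.factorial
        (by rw [hq]; exact Nat.descFactorial_self q) (by omega) (by omega)
    have hz1 : (Yop n ^ q) v' ⟨n - 1, by omega⟩ = 0 :=
      Ypow_supp n v' j0 hv' q _ (by simp; omega)
    have hwl1 := wedge_last1 n hn ((Yop n ^ (p - 1)) v) ((Yop n ^ q) v') hu1s hw1s _ _ hx1 hy1 hz1
    -- second term
    have hu2s : ∀ k : Fin (n + 1), (k : ℕ) < n - 1 → (Yop n ^ p) v k = 0 :=
      fun k hk => Ypow_supp n v i0 hv p k (by omega)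
    have hw2s : ∀ k : Fin (n + 1), (k : ℕ) < n - 1 → (Yop n ^ (q - 1)) v' k = 0 :=
      fun k hk => Ypow_supp n v' j0 hv' (q - 1) k (by omega)
    have hx2 : (Yop n ^ p) v ⟨n, by omega⟩ = ((p.factorial : ℕ) : ℂ) * v ⟨i0, by omega⟩ :=
      Ypow_coord' n v p i0 n (by omega) (by omega) p.factorial
        (by rw [hp]; exact Nat.descFactorial_self p) (by omega) (by omega)
    have hy2 : (Yop n ^ (q - 1)) v' ⟨n - 1, by omega⟩ =
        ((q.factorial : ℕ) : ℂ) * v' ⟨j0, by omega⟩ :=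
      Ypow_coord' n v' (q - 1) j0 (n - 1) (by omega) (by omega) q.factorial
        (by rw [hq]; exact desc_pred q hq1) (by omega) (by omega)
    have hz2 : (Yop n ^ p) v ⟨n - 1, by omega⟩ = 0 :=
      Ypow_supp n v i0 hv p _ (by simp; omega)
    have hwl2 := wedge_last2 n hn ((Yop n ^ p) v) ((Yop n ^ (q - 1)) v') hu2s hw2s _ _ hx2 hy2 hz2
    have hfin := hsum.trans (congrArg₂ (fun x y =>
      ((N.choose (p - 1) : ℕ) : ℂ) • x + ((N.choose p : ℕ) : ℂ) • y) hwl1 hwl2)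
    beta_reduce at hfin
    rw [smul_smul, smul_smul, ← add_smul] at hfin
    refine hfacE _ ?_ hfin
    have hchoose : N.choose (p - 1) ≠ N.choose p := by
      intro heq
      have hch := Nat.choose_succ_right_eq N (p - 1)
      rw [show p - 1 + 1 = p by omega, show N - (p - 1) = q by omega, ← heq] at hch
      have hpos : 0 < N.choose (p - 1) := Nat.choose_pos (by omega)
      have := Nat.eq_of_mul_eq_mul_left hpos hch
      omega
    have hdiff : ((N.choose (p - 1) : ℕ) : ℂ) - ((N.choose p : ℕ) : ℂ) ≠ 0 := by
      rw [sub_ne_zero]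
      exact_mod_cast hchoose
    have hrw : ((N.choose (p - 1) : ℕ) : ℂ) *
          (((p.factorial : ℕ) : ℂ) * v ⟨i0, by omega⟩ *
            (((q.factorial : ℕ) : ℂ) * v' ⟨j0, by omega⟩))
        + ((N.choose p : ℕ) : ℂ) *
          (-(((p.factorial : ℕ) : ℂ) * v ⟨i0, by omega⟩ *
            (((q.factorial : ℕ) : ℂ) * v' ⟨j0, by omega⟩)))
        = (((N.choose (p - 1) : ℕ) : ℂ) - ((N.choose p : ℕ) : ℂ)) * ((p.factorial : ℕ) : ℂ)
            * ((q.factorial : ℕ) : ℂ) * v ⟨i0, by omega⟩ * v' ⟨j0, by omega⟩ := by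
      ring
    rw [hrw]
    exact mul_ne_zero (mul_ne_zero (mul_ne_zero (mul_ne_zero hdiff hfacp) hfacq) ha) hb

lemma lemQ (n : ℕ)
    (T : Module.End ℂ (⋀[ℂ]^2 (Fin (n + 1) → ℂ)))
    (hT : ∀ i j : ℕ, i < j → j ≤ n →
      T (wedge (e n i) (e n j)) =
        (n - i) • wedge (e n (i + 1)) (e n j) + (n - j) • wedge (e n i) (e n (j + 1)))
    (W : Submodule ℂ (⋀[ℂ]^2 (Fin (n + 1) → ℂ)))
    (hTW : ∀ w ∈ W, T w ∈ W)
    (hW : wedge (e n (n - 1)) (e n n) ∉ W) :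
    ∀ d i0 j0 : ℕ, i0 < j0 → j0 + d = n + 1 →
      ∀ v v' : Fin (n + 1) → ℂ,
        (∀ k : Fin (n + 1), (k : ℕ) < i0 → v k = 0) →
        (∃ k : Fin (n + 1), (k : ℕ) = i0 ∧ v k ≠ 0) →
        (∀ k : Fin (n + 1), (k : ℕ) < j0 → v' k = 0) →
        wedge v v' ∈ W → wedge v v' = 0 := by
  intro d
  induction d with
  | zero =>
    intro i0 j0 hij hd v v' hv hvi hv' hmem
    have hz : v' = 0 := funext fun k => hv' k (by have := k.2; omega)
    rw [hz, wedge_zero_right]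
  | succ d ih =>
    intro i0 j0 hij hd v v' hv hvi hv' hmem
    by_cases hb : v' ⟨j0, by omega⟩ = 0
    · apply ih i0 (j0 + 1) (by omega) (by omega) v v' hv hvi _ hmem
      intro k hk
      rcases Nat.lt_or_ge (k : ℕ) j0 with h | h
      · exact hv' k h
      · have hk0 : k = ⟨j0, by omega⟩ := Fin.ext (by simp; omega)
        rw [hk0]; exact hb
    · obtain ⟨k0, hk0, hk0ne⟩ := hvi
      have ha : v ⟨i0, by omega⟩ ≠ 0 := by
        have hk1 : k0 = ⟨i0, by omega⟩ := Fin.ext (by simp [hk0])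
        rwa [hk1] at hk0ne
      exact (main_step n T hT W hTW hW i0 j0 hij (by omega) v v' hv ha hv' hb hmem).elim

lemma lemP (n : ℕ)
    (T : Module.End ℂ (⋀[ℂ]^2 (Fin (n + 1) → ℂ)))
    (hT : ∀ i j : ℕ, i < j → j ≤ n →
      T (wedge (e n i) (e n j)) =
        (n - i) • wedge (e n (i + 1)) (e n j) + (n - j) • wedge (e n i) (e n (j + 1)))
    (W : Submodule ℂ (⋀[ℂ]^2 (Fin (n + 1) → ℂ)))
    (hTW : ∀ w ∈ W, T w ∈ W)
    (hW : wedge (e n (n - 1)) (e n n) ∉ W) :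
    ∀ d i0 : ℕ, i0 + d = n + 1 →
      ∀ v v' : Fin (n + 1) → ℂ,
        (∀ k : Fin (n + 1), (k : ℕ) < i0 → v k = 0) →
        (∀ k : Fin (n + 1), (k : ℕ) < i0 → v' k = 0) →
        wedge v v' ∈ W → wedge v v' = 0 := by
  intro d
  induction d with
  | zero =>
    intro i0 hd v v' hv hv' hmem
    have hz : v = 0 := funext fun k => hv k (by have := k.2; omega)
    rw [hz, wedge_zero_left]
  | succ d ih =>
    intro i0 hd v v' hv hv' hmem
    by_cases h1 : v ⟨i0, by omega⟩ = 0
    · by_cases h2 : v' ⟨i0, by omega⟩ = 0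
      · refine ih (i0 + 1) (by omega) v v' ?_ ?_ hmem
        · intro k hk
          rcases Nat.lt_or_ge (k : ℕ) i0 with h | h
          · exact hv k h
          · have hk0 : k = ⟨i0, by omega⟩ := Fin.ext (by simp; omega)
            rw [hk0]; exact h1
        · intro k hk
          rcases Nat.lt_or_ge (k : ℕ) i0 with h | h
          · exact hv' k h
          · have hk0 : k = ⟨i0, by omega⟩ := Fin.ext (by simp; omega)
            rw [hk0]; exact h2
      · have hswap : wedge v' v = - wedge v v' := wedge_swap v' v
        have hmem' : wedge v' v ∈ W := by rw [hswap]; exact Submodule.neg_mem W hmem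
        have hvsupp : ∀ k : Fin (n + 1), (k : ℕ) < i0 + 1 → v k = 0 := by
          intro k hk
          rcases Nat.lt_or_ge (k : ℕ) i0 with h | h
          · exact hv k h
          · have hk0 : k = ⟨i0, by omega⟩ := Fin.ext (by simp; omega)
            rw [hk0]; exact h1
        have h0 := lemQ n T hT W hTW hW (n - i0) i0 (i0 + 1) (by omega) (by omega) v' v hv'
          ⟨⟨i0, by omega⟩, rfl, h2⟩ hvsupp hmem'
        rw [hswap] at h0
        exact neg_eq_zero.mp h0
    · have hvv : wedge v (v' - (v' ⟨i0, by omega⟩ / v ⟨i0, by omega⟩) • v) = wedge v v' := by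
        have h3 : v' - (v' ⟨i0, by omega⟩ / v ⟨i0, by omega⟩) • v
            = v' + (-(v' ⟨i0, by omega⟩ / v ⟨i0, by omega⟩)) • v := by module
        rw [h3, wedge_add_right, wedge_smul_right, wedge_self, smul_zero, add_zero]
      have hsupp : ∀ k : Fin (n + 1), (k : ℕ) < i0 + 1 →
          (v' - (v' ⟨i0, by omega⟩ / v ⟨i0, by omega⟩) • v) k = 0 := by
        intro k hk
        rcases Nat.lt_or_ge (k : ℕ) i0 with h | h
        · simp [hv k h, hv' k h]
        · have hk0 : k = ⟨i0, by omega⟩ := Fin.ext (by simp; omega)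
          rw [hk0]
          simp only [Pi.sub_apply, Pi.smul_apply, smul_eq_mul]
          rw [div_mul_cancel₀ _ h1, sub_self]
      have h0 := lemQ n T hT W hTW hW (n - i0) i0 (i0 + 1) (by omega) (by omega) v
        (v' - (v' ⟨i0, by omega⟩ / v ⟨i0, by omega⟩) • v) hv
        ⟨⟨i0, by omega⟩, rfl, h1⟩ hsupp (by rw [hvv]; exact hmem)
      rw [hvv] at h0
      exact h0


/-- Let `V = ℂ^{n+1}` with standard basis `e_0, …, e_n` (`n ≥ 1`), and let
`T` be the unique linear endomorphism of `⋀²V` satisfying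
`T(e_i ∧ e_j) = (n−i)(e_{i+1} ∧ e_j) + (n−j)(e_i ∧ e_{j+1})` for all `0 ≤ i < j ≤ n`, with
the convention `e_{n+1} = 0`.  Let `W ⊆ ⋀²V` be a linear subspace with `T(W) ⊆ W` and
`e_{n−1} ∧ e_n ∉ W`.  Then `W` contains no nonzero decomposable bivector: if `v, v' ∈ V`
and `v ∧ v' ∈ W`, then `v ∧ v' = 0`. -/
theorem statement3 (n : ℕ) (hn : 1 ≤ n)
    (T : Module.End ℂ (⋀[ℂ]^2 (Fin (n + 1) → ℂ)))
    (hT : ∀ i j : ℕ, i < j → j ≤ n →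
      T (wedge (e n i) (e n j)) =
        (n - i) • wedge (e n (i + 1)) (e n j) + (n - j) • wedge (e n i) (e n (j + 1)))
    (W : Submodule ℂ (⋀[ℂ]^2 (Fin (n + 1) → ℂ)))
    (hTW : ∀ w ∈ W, T w ∈ W)
    (hW : wedge (e n (n - 1)) (e n n) ∉ W) :
    ∀ v v' : Fin (n + 1) → ℂ, wedge v v' ∈ W → wedge v v' = 0 := by
  intro v v' hmem
  exact lemP n T hT W hTW hW (n + 1) 0 (by omega) v v'
    (fun k hk => absurd hk (by omega)) (fun k hk => absurd hk (by omega)) hmem
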